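/- Let α, β, γ ∈ ℝ with γ ≠ 0. Then (𝔤₂, g, J) is a second kind algebraic Wanas soliton associated to the canonical connection ∇⁰ if and only if α = β = 0 and the soliton constant satisfies 2γ² + c = 0; in that case the derivation D satisfies De₁ = 0, De₂ = γ²e₂, De₃ = 2γ²e₃. -/

import Mathlib

noncomputable section

/-- The underlying vector space `ℝ³`. -/
abbrev V : Type := Fin 3 → ℝ

/-- The basis vector `e₁`. -/
def e1 : V := ![1, 0, 0]

/-- The basis vector `e₂`. -/
def e2 : V := ![0, 1, 0]

/-- The basis vector `e₃`. -/
def e3 : V := ![0, 0, 1]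

/-- The Lorentzian metric `g` with `g(e₁,e₁) = g(e₂,e₂) = 1`, `g(e₃,e₃) = -1`. -/
def g (x y : V) : ℝ := x 0 * y 0 + x 1 * y 1 - x 2 * y 2

/-- The Lie bracket. -/
def br (α β γ : ℝ) (x y : V) : V :=
  (x 0 * y 1 - x 1 * y 0) • (γ • e2 - β • e3) + (x 0 * y 2 - x 2 * y 0) • (-(β • e2) - γ • e3) +
    (x 1 * y 2 - x 2 * y 1) • (α • e1)

/-- The canonical connection `∇⁰`. -/
def nab (α β γ : ℝ) (x y : V) : V :=
  (x 1 * y 0) • (-(γ • e2)) + (x 1 * y 1) • (γ • e1) + (x 2 * y 0) • ((α / 2) • e2) +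
    (x 2 * y 1) • (-((α / 2) • e1))

/-- The torsion `T⁰(X,Y) = ∇⁰_X Y - ∇⁰_Y X - [X,Y]`. -/
def T (α β γ : ℝ) (x y : V) : V := nab α β γ x y - nab α β γ y x - br α β γ x y

/-- The tensor `A⁰(X,Y)Z = T⁰(T⁰(X,Y),Z)`. -/
def A (α β γ : ℝ) (x y z : V) : V := T α β γ (T α β γ x y) z

/-- The curvature `R⁰(X,Y)Z = ∇⁰_X ∇⁰_Y Z - ∇⁰_Y ∇⁰_X Z - ∇⁰_{[X,Y]} Z`. -/
def Rc (α β γ : ℝ) (x y z : V) : V :=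
  nab α β γ x (nab α β γ y z) - nab α β γ y (nab α β γ x z) - nab α β γ (br α β γ x y) z

/-- The Wanas tensor `W⁰(X,Y)Z = R⁰(X,Y)Z - A⁰(X,Y)Z`. -/
def W (α β γ : ℝ) (x y z : V) : V := Rc α β γ x y z - A α β γ x y z

/-- `w⁰(X,Y) = -g(W⁰(X,e₁)Y,e₁) - g(W⁰(X,e₂)Y,e₂) + g(W⁰(X,e₃)Y,e₃)`. -/
def w (α β γ : ℝ) (x y : V) : ℝ :=
  -g (W α β γ x e1 y) e1 - g (W α β γ x e2 y) e2 + g (W α β γ x e3 y) e3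

/-- `w̃⁰(X,Y) = (w⁰(X,Y) + w⁰(Y,X))/2`. -/
def wt (α β γ : ℝ) (x y : V) : ℝ := (w α β γ x y + w α β γ y x) / 2

/-- `D` is a derivation of the Lie algebra. -/
def IsDeriv (α β γ : ℝ) (D : V →ₗ[ℝ] V) : Prop :=
  ∀ x y, D (br α β γ x y) = br α β γ (D x) y + br α β γ x (D y)

/-!
Evaluating `w̃⁰` on the basis shows that `W̃an⁰` preserves `ℝe₁` and `span {e₂, e₃}`, with
coefficients polynomial in `α, β, γ`; so `D = W̃an⁰ - c·Id` is known explicitly and the derivation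
identity on `[e₁,e₂]` and `[e₂,e₃]` becomes three polynomial equations. The `e₂`-component of the
first gives `c = -2γ² - αβ - β²` since `γ ≠ 0`; substituted into the `e₁`-component of the second it
leaves `α (6γ² + (α - 2β)² + 2β²) = 0`, so `α = 0`, and then the `e₃`-component of the first reads
`β (2γ² + β²) = 0`. Conversely, for `α = β = 0` every map `diag(0, a, b)` is a derivation.
-/

/-- The operator `W̃an⁰`, written out in coordinates. -/
def wanas (α β γ : ℝ) (x : V) : V :=
  ![(-2 * γ ^ 2 - 2 * β ^ 2 + α * β / 2) * x 0,
    (-γ ^ 2 - 3 / 2 * (α * β)) * x 1 + (β * γ / 2 - 3 / 4 * (α * γ)) * x 2,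
    -((β * γ / 2 - 3 / 4 * (α * γ)) * x 1 + (α * β - α ^ 2 / 2) * x 2)]

theorem wt_eq_g_wanas (α β γ : ℝ) (x y : V) : wt α β γ x y = g (wanas α β γ x) y := by
  simp [wt, w, W, Rc, A, T, nab, br, g, e1, e2, e3, wanas]
  ring

theorem eq_of_forall_g_eq {u v : V} (h : ∀ y, g u y = g v y) : u = v := by
  ext i
  fin_cases i
  · simpa [g, e1] using h e1
  · simpa [g, e2] using h e2
  · simpa [g, e3] using h e3

theorem eq_coord_smul_e (v : V) : v = v 0 • e1 + v 1 • e2 + v 2 • e3 := by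
  ext i
  fin_cases i <;> simp [e1, e2, e3]

theorem LinearMap.apply_eq_coord_smul_e (D : V →ₗ[ℝ] V) (v : V) :
    D v = v 0 • D e1 + v 1 • D e2 + v 2 • D e3 := by
  conv_lhs => rw [eq_coord_smul_e v]
  simp only [map_add, map_smul]

theorem IsDeriv.soliton_equations {α β γ c : ℝ} {D : V →ₗ[ℝ] V} (hD : IsDeriv α β γ D)
    (hS : ∀ x, D x = wanas α β γ x - c • x) :
    γ * (2 * γ ^ 2 + α * β + β ^ 2 + c) = 0 ∧
      α * (2 * c - 2 * γ ^ 2 + 6 * α * β - 4 * β ^ 2 - α ^ 2) = 0 ∧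
      β * (8 * γ ^ 2 + 2 * c + 4 * β ^ 2 + α ^ 2) = 3 * α * γ ^ 2 := by
  have h12₁ := congrFun (hD e1 e2) 1
  have h12₂ := congrFun (hD e1 e2) 2
  have h23₀ := congrFun (hD e2 e3) 0
  simp [hS, wanas, br, e1, e2, e3] at h12₁ h12₂ h23₀
  exact ⟨by linear_combination h12₁, by linear_combination 2 * h23₀,
    by linear_combination -2 * h12₂⟩

theorem soliton_params_eq_zero {α β γ c : ℝ} (hγ : γ ≠ 0)
    (h₁ : γ * (2 * γ ^ 2 + α * β + β ^ 2 + c) = 0)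
    (h₂ : α * (2 * c - 2 * γ ^ 2 + 6 * α * β - 4 * β ^ 2 - α ^ 2) = 0)
    (h₃ : β * (8 * γ ^ 2 + 2 * c + 4 * β ^ 2 + α ^ 2) = 3 * α * γ ^ 2) :
    α = 0 ∧ β = 0 ∧ 2 * γ ^ 2 + c = 0 := by
  have hc : 2 * γ ^ 2 + α * β + β ^ 2 + c = 0 := (mul_eq_zero.1 h₁).resolve_left hγ
  have hα : α = 0 := by
    have : α * (6 * γ ^ 2 + (α - 2 * β) ^ 2 + 2 * β ^ 2) = 0 := by
      linear_combination -h₂ + 2 * α * hc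
    exact (mul_eq_zero.1 this).resolve_right (by positivity)
  subst hα
  have hβ : β = 0 := by
    have : β * (4 * γ ^ 2 + 2 * β ^ 2) = 0 := by linear_combination h₃ - 2 * β * hc
    exact (mul_eq_zero.1 this).resolve_right (by positivity)
  subst hβ
  exact ⟨rfl, rfl, by linear_combination hc⟩

theorem isDeriv_of_apply_e {γ a b : ℝ} {D : V →ₗ[ℝ] V} (h₁ : D e1 = 0) (h₂ : D e2 = a • e2)
    (h₃ : D e3 = b • e3) : IsDeriv 0 0 γ D := by
  intro x y
  rw [D.apply_eq_coord_smul_e, D.apply_eq_coord_smul_e x, D.apply_eq_coord_smul_e y, h₁, h₂, h₃]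
  ext i
  fin_cases i <;> simp [br, e1, e2, e3] <;> ring

theorem g2_second_kind_algebraic_Wanas_soliton (α β γ : ℝ) (hγ : γ ≠ 0)
    (tWan : V →ₗ[ℝ] V) (htWan : ∀ x y, wt α β γ x y = g (tWan x) y)
    (c : ℝ) (D : V →ₗ[ℝ] V) :
    (IsDeriv α β γ D ∧ ∀ x, tWan x = c • x + D x) ↔
      α = 0 ∧ β = 0 ∧ 2 * γ ^ 2 + c = 0 ∧
        D e1 = 0 ∧ D e2 = γ ^ 2 • e2 ∧ D e3 = (2 * γ ^ 2) • e3 := by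
  have hT (x : V) : tWan x = wanas α β γ x :=
    eq_of_forall_g_eq fun y => by rw [← htWan, wt_eq_g_wanas]
  constructor
  · rintro ⟨hD, hS⟩
    have hS' (x : V) : D x = wanas α β γ x - c • x := by rw [← hT, hS]; abel
    obtain ⟨h₁, h₂, h₃⟩ := hD.soliton_equations hS'
    obtain ⟨rfl, rfl, hc⟩ := soliton_params_eq_zero hγ h₁ h₂ h₃
    refine ⟨rfl, rfl, hc, ?_, ?_, ?_⟩ <;> rw [hS'] <;> ext i <;> fin_cases i <;>
      simp [wanas, e1, e2, e3] <;> linarith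
  · rintro ⟨rfl, rfl, hc, h₁, h₂, h₃⟩
    refine ⟨isDeriv_of_apply_e h₁ h₂ h₃, fun x => ?_⟩
    rw [hT, D.apply_eq_coord_smul_e x, h₁, h₂, h₃]
    ext i
    fin_cases i <;> simp [wanas, e2, e3] <;> linear_combination (-x _) * hc
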